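/- arXiv:2004.05465 — 3 statements merged into one kernel-verified Lean document; each statement's English description precedes it below -/
import Mathlib

section
/- Let d ≥ 1, w, x ∈ ℝ^{d+1} and y ∈ {−1, +1}. Suppose w ∗ w ≤ −1, x ∗ x = 1, and y·(x ∗ w) < 0 (i.e., x is misclassified by w). Then the hyperbolic perceptron update v = w + y·x satisfies v ∗ v < 0, and the normalized iterate u = v / min{1, √(−v ∗ v)} satisfies u ∗ u ≤ −1. In particular every iterate of the hyperbolic perceptron defines a valid decision hyperplane intersecting L^d. -/
/-- The Minkowski product on ℝ^{d+1}: `x ∗ y = x₀ y₀ − ∑_{i=1}^d xᵢ yᵢ`. -/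
noncomputable def mink {d : ℕ} (x y : Fin (d + 1) → ℝ) : ℝ :=
  x 0 * y 0 - ∑ i : Fin d, x i.succ * y i.succ

/-! Since `x ∗ x = 1` and `y² = 1`, the update changes the Minkowski norm by
`v ∗ v − w ∗ w = 2 y (x ∗ w) + 1 < 1`, so `v ∗ v < 0`. Dividing by `min 1 √(−v ∗ v)` either
leaves `v` alone (when already `v ∗ v ≤ −1`) or rescales it to `v ∗ v = −1`. -/

section Minkowski

variable {d : ℕ}

theorem mink_add_smul_self (w x : Fin (d + 1) → ℝ) (c : ℝ) :
    mink (w + c • x) (w + c • x) = mink w w + 2 * c * mink x w + c ^ 2 * mink x x := by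
  simp only [mink, Pi.add_apply, Pi.smul_apply, smul_eq_mul]
  have hterm : ∀ i : Fin d, (w i.succ + c * x i.succ) * (w i.succ + c * x i.succ)
      = w i.succ * w i.succ + 2 * c * (x i.succ * w i.succ) + c ^ 2 * (x i.succ * x i.succ) :=
    fun i => by ring
  simp_rw [hterm, Finset.sum_add_distrib, ← Finset.mul_sum]
  ring

theorem mink_smul_self (c : ℝ) (v : Fin (d + 1) → ℝ) :
    mink (c • v) (c • v) = c ^ 2 * mink v v := by
  simp only [mink, Pi.smul_apply, smul_eq_mul]
  simp_rw [show ∀ i : Fin d, c * v i.succ * (c * v i.succ) = c ^ 2 * (v i.succ * v i.succ)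
    from fun i => by ring, ← Finset.mul_sum]
  ring

theorem mink_add_smul_self_neg {w x : Fin (d + 1) → ℝ} {y : ℝ} (hw : mink w w ≤ -1)
    (hx : mink x x = 1) (hy : y ^ 2 = 1) (hmis : y * mink x w < 0) :
    mink (w + y • x) (w + y • x) < 0 := by
  rw [mink_add_smul_self, hx, hy]
  linarith

theorem mink_normalize_le_neg_one {v : Fin (d + 1) → ℝ} (hv : mink v v < 0) :
    mink ((min 1 (Real.sqrt (-mink v v)))⁻¹ • v) ((min 1 (Real.sqrt (-mink v v)))⁻¹ • v)
      ≤ -1 := by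
  rw [mink_smul_self]
  have hsq : Real.sqrt (-mink v v) ^ 2 = -mink v v := Real.sq_sqrt (by linarith)
  rcases le_total (Real.sqrt (-mink v v)) 1 with hle | hge
  · rw [min_eq_right hle, inv_pow, hsq, inv_mul_eq_div, div_neg, div_self hv.ne]
  · have hle : mink v v ≤ -1 := by nlinarith
    simpa [min_eq_left hge] using hle

end Minkowski

theorem hyperbolic_perceptron_update_valid_general {d : ℕ}
    (w x : Fin (d + 1) → ℝ) (y : ℝ) (hy : y = 1 ∨ y = -1)
    (hw : mink w w ≤ -1) (hx : mink x x = 1) (hmis : y * mink x w < 0) :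
    mink (w + y • x) (w + y • x) < 0 ∧
    mink ((min 1 (Real.sqrt (-(mink (w + y • x) (w + y • x)))))⁻¹ • (w + y • x))
         ((min 1 (Real.sqrt (-(mink (w + y • x) (w + y • x)))))⁻¹ • (w + y • x)) ≤ -1 := by
  have hy2 : y ^ 2 = 1 := by rcases hy with rfl | rfl <;> norm_num
  have hneg := mink_add_smul_self_neg hw hx hy2 hmis
  exact ⟨hneg, mink_normalize_le_neg_one hneg⟩

/-- validity of the hyperbolic perceptron update. If `w ∗ w ≤ −1`,
`x ∗ x = 1` and `x` is misclassified by `w` (`y·(x ∗ w) < 0`), then the update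
`v = w + y·x` satisfies `v ∗ v < 0`, and the normalized iterate
`u = v / min{1, √(−v ∗ v)}` satisfies `u ∗ u ≤ −1`. -/
theorem hyperbolic_perceptron_update_valid {d : ℕ} (hd : 1 ≤ d)
    (w x : Fin (d + 1) → ℝ) (y : ℝ) (hy : y = 1 ∨ y = -1)
    (hw : mink w w ≤ -1) (hx : mink x x = 1) (hmis : y * mink x w < 0) :
    mink (w + y • x) (w + y • x) < 0 ∧
    mink ((min 1 (Real.sqrt (-(mink (w + y • x) (w + y • x)))))⁻¹ • (w + y • x))
         ((min 1 (Real.sqrt (-(mink (w + y • x) (w + y • x)))))⁻¹ • (w + y • x)) ≤ -1 :=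
  hyperbolic_perceptron_update_valid_general w x y hy hw hx hmis
end

section
/- (Exponential lower bound for plain gradient descent, Theorem 2.) Let R ≥ 1 and f(s) = ln(1 + exp(−arsinh(s/(2R)))) be the hyperbolic logistic loss function. Define the real recursion a₀ = 0, a_{t+1} = a_t − f′(a_t). Then 0 ≤ a_t ≤ t for every t ∈ ℕ. Consequently, for the training set S = {((1,0,…,0), +1), ((−1,0,…,0), −1)} ⊂ ℝ^{d+1} × {±1} and the gradient-descent-with-normalization iterates w_t = (a_t, √(a_t² + 1), 0, …, 0) initialized at w₀ = e₂, the hyperbolic margin of w_t on S equals arsinh(a_t) ≤ arsinh(t), so reaching margin at least γ_H > 0 requires t ≥ sinh(γ_H), i.e., a number of iterations that is Ω(exp(γ_H)). -/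
/-!
The derivative of `s ↦ log (1 + exp (-arsinh (s / c)))` is a logistic factor in `(0, 1)` times
the derivative of `arsinh (s / c)`, which lies in `(0, 1 / c]`. With `c = 2R ≥ 1` every gradient
step therefore moves `aₜ` right by at most `1`, so `0 ≤ aₜ ≤ t`. The iterate `wₜ` lies on the
hyperboloid `w ∗ w = -1`, so its margin on both points of `S` is `arsinh (wₜ ∗ (1, 0, …, 0)) = arsinh aₜ`.
-/

open Real

theorem hasDerivAt_log_one_add_exp_neg_arsinh_div (c s : ℝ) :
    HasDerivAt (fun s => log (1 + exp (-arsinh (s / c))))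
      (-(exp (-arsinh (s / c)) / (1 + exp (-arsinh (s / c)))) / (c * √(1 + (s / c) ^ 2))) s := by
  refine (((((hasDerivAt_id s).div_const c).arsinh).neg.exp.const_add 1).log
    (by positivity)).congr_deriv ?_
  simp only [id, Pi.neg_apply, smul_eq_mul]
  ring

theorem deriv_log_one_add_exp_neg_arsinh_div_mem_Icc {c : ℝ} (hc : 0 < c) (s : ℝ) :
    deriv (fun s => log (1 + exp (-arsinh (s / c)))) s ∈ Set.Icc (-c⁻¹) 0 := by
  rw [(hasDerivAt_log_one_add_exp_neg_arsinh_div c s).deriv]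
  set e := exp (-arsinh (s / c))
  have he : 0 < e := exp_pos _
  have hp : e / (1 + e) ≤ 1 := (div_le_one (by positivity)).mpr (by linarith)
  have hq : c ≤ c * √(1 + (s / c) ^ 2) :=
    le_mul_of_one_le_right hc.le (one_le_sqrt.mpr (by nlinarith [sq_nonneg (s / c)]))
  refine ⟨?_, div_nonpos_of_nonpos_of_nonneg (neg_nonpos.mpr (by positivity)) (by positivity)⟩
  calc -c⁻¹ ≤ -(c * √(1 + (s / c) ^ 2))⁻¹ := neg_le_neg (inv_anti₀ hc hq)
    _ ≤ _ := by
      rw [neg_div, neg_le_neg_iff, div_eq_mul_inv]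
      exact mul_le_of_le_one_left (by positivity) hp

theorem mem_Icc_of_descent_step_mem_Icc {g : ℝ → ℝ} (hg : ∀ s, g s ∈ Set.Icc (-1) 0)
    {a : ℕ → ℝ} (ha0 : a 0 = 0) (ha : ∀ t, a (t + 1) = a t - g (a t)) (t : ℕ) :
    a t ∈ Set.Icc 0 (t : ℝ) := by
  induction t with
  | zero => simp [ha0]
  | succ t ih =>
    rw [ha t]
    push_cast
    obtain ⟨hg_low, hg_up⟩ := hg (a t)
    exact ⟨by linarith [ih.1], by linarith [ih.2]⟩

theorem mink_single_zero_right {d : ℕ} (x : Fin (d + 1) → ℝ) (c : ℝ) :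
    mink x (Pi.single 0 c) = x 0 * c := by
  simp [mink]

theorem mink_neg_right {d : ℕ} (x y : Fin (d + 1) → ℝ) : mink x (-y) = -mink x y := by
  simp only [mink, Pi.neg_apply, mul_neg, Finset.sum_neg_distrib]
  ring

theorem mink_self_of_eq_zero {d : ℕ} (hd : 1 ≤ d) (x : Fin (d + 1) → ℝ)
    (hx : ∀ i, i ≠ 0 → i ≠ 1 → x i = 0) :
    mink x x = x 0 ^ 2 - x 1 ^ 2 := by
  obtain ⟨d, rfl⟩ : ∃ d', d = d' + 1 := ⟨d - 1, by omega⟩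
  rw [mink, Fin.sum_univ_succ, Finset.sum_eq_zero fun i _ => by
    rw [hx _ (Fin.succ_ne_zero _) (Fin.succ_succ_ne_one _), zero_mul]]
  simp [sq]

/-- Theorem 2: exponential lower bound for plain gradient descent.
For the hyperbolic logistic loss `f(s) = ln(1 + exp(−arsinh(s/(2R))))` with `R ≥ 1`
and the recursion `a₀ = 0`, `a_{t+1} = aₜ − f′(aₜ)`, one has `0 ≤ aₜ ≤ t` for all `t`.
Consequently, for `S = {((1,0,…,0), +1), ((−1,0,…,0), −1)}` and the normalized GD
iterates `wₜ = (aₜ, √(aₜ² + 1), 0, …, 0)`, the hyperbolic margin of `wₜ` on each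
point of `S` equals `arsinh aₜ ≤ arsinh t`, so achieving margin `γ > 0` forces
`sinh γ ≤ t`, i.e. `t = Ω(exp γ)`. -/
theorem gradient_descent_exponential_lower_bound {d : ℕ} (hd : 1 ≤ d)
    (R : ℝ) (hR : 1 ≤ R)
    (f : ℝ → ℝ) (hf : ∀ s, f s = Real.log (1 + Real.exp (-Real.arsinh (s / (2 * R)))))
    (a : ℕ → ℝ) (ha0 : a 0 = 0) (ha : ∀ t, a (t + 1) = a t - deriv f (a t)) :
    (∀ t : ℕ, 0 ≤ a t ∧ a t ≤ (t : ℝ)) ∧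
    (∀ t : ℕ,
      let w : Fin (d + 1) → ℝ :=
        fun i => if i = 0 then a t else if i = 1 then Real.sqrt ((a t) ^ 2 + 1) else 0
      let x1 : Fin (d + 1) → ℝ := fun i => if i = 0 then 1 else 0
      Real.arsinh ((1 : ℝ) * mink w x1 / Real.sqrt (-(mink w w))) = Real.arsinh (a t) ∧
      Real.arsinh ((-1 : ℝ) * mink w (-x1) / Real.sqrt (-(mink w w))) = Real.arsinh (a t) ∧
      Real.arsinh (a t) ≤ Real.arsinh (t : ℝ) ∧
      (∀ γ : ℝ, 0 < γ → γ ≤ Real.arsinh (a t) → Real.sinh γ ≤ (t : ℝ))) := by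
  have hderiv (s : ℝ) : deriv f s ∈ Set.Icc (-1) 0 := by
    obtain ⟨hlow, hup⟩ :=
      deriv_log_one_add_exp_neg_arsinh_div_mem_Icc (c := 2 * R) (by linarith) s
    rw [funext hf]
    exact ⟨le_trans (neg_le_neg (inv_le_one_of_one_le₀ (by linarith))) hlow, hup⟩
  have hbounds := mem_Icc_of_descent_step_mem_Icc hderiv ha0 ha
  refine ⟨hbounds, fun t => ?_⟩
  intro w x1
  have hx1 : x1 = Pi.single 0 1 := by
    funext i
    simp [x1, Pi.single_apply]
  have hone : (1 : Fin (d + 1)) ≠ 0 := by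
    rw [Ne, Fin.one_eq_zero_iff]
    omega
  have hww : mink w w = -1 := by
    rw [mink_self_of_eq_zero hd w fun i h0 h1 => by simp [w, h0, h1]]
    simp [w, hone, sq_sqrt (add_nonneg (sq_nonneg (a t)) zero_le_one)]
  have hnorm : √(-mink w w) = 1 := by rw [hww, neg_neg, sqrt_one]
  refine ⟨?_, ?_, arsinh_le_arsinh.mpr (hbounds t).2, fun γ _ hγ => ?_⟩
  · rw [hnorm, hx1, mink_single_zero_right]
    simp [w]
  · rw [hnorm, hx1, mink_neg_right, mink_single_zero_right]
    simp [w]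
  · calc sinh γ ≤ sinh (arsinh (a t)) := sinh_le_sinh.mpr hγ
      _ = a t := sinh_arsinh _
      _ ≤ t := (hbounds t).2
end

section
/- (Closed form of the certification problem CERT, Theorem 3.) Let d ≥ 2, let x̌, w̌ ∈ ℝ^d be unit vectors, write ξ = ⟨w̌, x̌⟩ and ζ = √(1 − ξ²), and let x̌⊥ be a unit vector orthogonal to x̌ such that w̌ = ξ·x̌ + ζ·x̌⊥. Let b ∈ [−1, 1] with ξ ≥ b. Then z* = b·x̌ + √(1 − b²)·x̌⊥ satisfies ‖z*‖ = 1 and ⟨x̌, z*⟩ = b, and for every z ∈ ℝ^d with ‖z‖ = 1 and ⟨x̌, z⟩ ≤ b one has ⟨w̌, z⟩ ≤ ⟨w̌, z*⟩ = ξ·b + ζ·√(1 − b²). That is, z* maximizes the linear objective ⟨w̌, ·⟩ over the spherical cap {z : ‖z‖ = 1, ⟨x̌, z⟩ ≤ b}. -/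
/-!
Write `t = ⟨x̌, z⟩` and `u = ⟨x̌⊥, z⟩`. Bessel's inequality gives `t² + u² ≤ ‖z‖² = 1`, so
`⟨w̌, z⟩ = ξ t + ζ u ≤ ξ t + ζ √(1 - t²) = cos (arccos t - arccos ξ)`. On the range
`-1 ≤ t ≤ b ≤ ξ` the angle `arccos t - arccos ξ` lies in `[0, π]` and grows as `t` decreases,
so the cosine is largest at `t = b`, where it equals `⟨w̌, z*⟩`.
-/

open scoped RealInnerProductSpace

open Real

lemma mul_add_sqrt_mul_sqrt_eq_cos_arccos_sub {ξ t : ℝ} (hξ : ξ ∈ Set.Icc (-1 : ℝ) 1)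
    (ht : t ∈ Set.Icc (-1 : ℝ) 1) :
    ξ * t + √(1 - ξ ^ 2) * √(1 - t ^ 2) = cos (arccos t - arccos ξ) := by
  rw [cos_sub, cos_arccos ht.1 ht.2, cos_arccos hξ.1 hξ.2, sin_arccos, sin_arccos]
  ring

lemma mul_add_sqrt_mul_sqrt_le_of_le {ξ t b : ℝ} (hξ : ξ ≤ 1) (ht : -1 ≤ t) (htb : t ≤ b)
    (hbξ : b ≤ ξ) :
    ξ * t + √(1 - ξ ^ 2) * √(1 - t ^ 2) ≤ ξ * b + √(1 - ξ ^ 2) * √(1 - b ^ 2) := by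
  have hξ' : ξ ∈ Set.Icc (-1 : ℝ) 1 := ⟨by linarith, hξ⟩
  rw [mul_add_sqrt_mul_sqrt_eq_cos_arccos_sub hξ' ⟨ht, by linarith⟩,
    mul_add_sqrt_mul_sqrt_eq_cos_arccos_sub hξ' ⟨by linarith, by linarith⟩]
  apply cos_le_cos_of_nonneg_of_le_pi
  · linarith [arccos_le_arccos hbξ]
  · linarith [arccos_le_pi t, arccos_nonneg ξ]
  · linarith [arccos_le_arccos htb]

section Orthonormal

variable {E : Type*} [NormedAddCommGroup E] [InnerProductSpace ℝ E] {x y : E}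

lemma inner_smul_add_smul_of_orthonormal (hx : ‖x‖ = 1) (hy : ‖y‖ = 1) (hxy : ⟪x, y⟫ = 0)
    (a b c d : ℝ) : ⟪a • x + b • y, c • x + d • y⟫ = a * c + b * d := by
  have hyx : ⟪y, x⟫ = 0 := by rw [real_inner_comm, hxy]
  simp only [inner_add_left, inner_add_right, real_inner_smul_left, real_inner_smul_right,
    real_inner_self_eq_norm_sq, hx, hy, hxy, hyx]
  ring

lemma norm_smul_add_smul_of_orthonormal (hx : ‖x‖ = 1) (hy : ‖y‖ = 1) (hxy : ⟪x, y⟫ = 0)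
    (a b : ℝ) : ‖a • x + b • y‖ = √(a ^ 2 + b ^ 2) := by
  rw [← sqrt_sq (norm_nonneg _), ← real_inner_self_eq_norm_sq,
    inner_smul_add_smul_of_orthonormal hx hy hxy]
  ring_nf

lemma inner_sq_add_inner_sq_le_norm_sq (hx : ‖x‖ = 1) (hy : ‖y‖ = 1) (hxy : ⟪x, y⟫ = 0)
    (z : E) : ⟪x, z⟫ ^ 2 + ⟪y, z⟫ ^ 2 ≤ ‖z‖ ^ 2 := by
  set p := ⟪x, z⟫ • x + ⟪y, z⟫ • y
  have hpz : ⟪z, p⟫ = ⟪x, z⟫ ^ 2 + ⟪y, z⟫ ^ 2 := by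
    simp only [p, inner_add_right, real_inner_smul_right, real_inner_comm z]
    ring
  have hp : ‖p‖ ^ 2 = ⟪x, z⟫ ^ 2 + ⟪y, z⟫ ^ 2 := by
    rw [← real_inner_self_eq_norm_sq, inner_smul_add_smul_of_orthonormal hx hy hxy]
    ring
  nlinarith [norm_sub_sq_real z p, sq_nonneg ‖z - p‖]

lemma inner_le_of_orthonormal_of_inner_le (hx : ‖x‖ = 1) (hy : ‖y‖ = 1) (hxy : ⟪x, y⟫ = 0)
    {ξ b : ℝ} (hξ : ξ ≤ 1) (hbξ : b ≤ ξ) {z : E} (hz : ‖z‖ = 1) (hzb : ⟪x, z⟫ ≤ b) :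
    ⟪ξ • x + √(1 - ξ ^ 2) • y, z⟫ ≤ ξ * b + √(1 - ξ ^ 2) * √(1 - b ^ 2) := by
  have hbessel := inner_sq_add_inner_sq_le_norm_sq hx hy hxy z
  rw [hz, one_pow] at hbessel
  have ht : -1 ≤ ⟪x, z⟫ := by nlinarith [sq_nonneg ⟪y, z⟫]
  have hu : ⟪y, z⟫ ≤ √(1 - ⟪x, z⟫ ^ 2) :=
    (le_abs_self _).trans (abs_le_sqrt (by linarith))
  calc ⟪ξ • x + √(1 - ξ ^ 2) • y, z⟫ = ξ * ⟪x, z⟫ + √(1 - ξ ^ 2) * ⟪y, z⟫ := by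
        rw [inner_add_left, real_inner_smul_left, real_inner_smul_left]
    _ ≤ ξ * ⟪x, z⟫ + √(1 - ξ ^ 2) * √(1 - ⟪x, z⟫ ^ 2) := by gcongr
    _ ≤ ξ * b + √(1 - ξ ^ 2) * √(1 - b ^ 2) :=
        mul_add_sqrt_mul_sqrt_le_of_le hξ ht hzb hbξ

end Orthonormal

theorem cert_closed_form_general {d : ℕ}
    (xc wc xperp : EuclideanSpace ℝ (Fin d))
    (hxc : ‖xc‖ = 1) (hwc : ‖wc‖ = 1) (hxperp : ‖xperp‖ = 1)
    (horth : ⟪xc, xperp⟫ = 0)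
    (ξ ζ : ℝ) (hξ : ξ = ⟪wc, xc⟫) (hζ : ζ = Real.sqrt (1 - ξ ^ 2))
    (hdecomp : wc = ξ • xc + ζ • xperp)
    (b : ℝ) (hb : b ∈ Set.Icc (-1 : ℝ) 1) (hξb : b ≤ ξ) :
    ‖b • xc + Real.sqrt (1 - b ^ 2) • xperp‖ = 1 ∧
    ⟪xc, b • xc + Real.sqrt (1 - b ^ 2) • xperp⟫ = b ∧
    ⟪wc, b • xc + Real.sqrt (1 - b ^ 2) • xperp⟫ = ξ * b + ζ * Real.sqrt (1 - b ^ 2) ∧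
    ∀ z : EuclideanSpace ℝ (Fin d), ‖z‖ = 1 → ⟪xc, z⟫ ≤ b →
      ⟪wc, z⟫ ≤ ⟪wc, b • xc + Real.sqrt (1 - b ^ 2) • xperp⟫ := by
  have hξ1 : ξ ≤ 1 := hξ ▸ (real_inner_le_norm wc xc).trans (by rw [hwc, hxc, one_mul])
  have hb2 : b ^ 2 + √(1 - b ^ 2) ^ 2 = 1 := by
    rw [sq_sqrt (by nlinarith [hb.1, hb.2])]
    ring
  have hwz : ⟪wc, b • xc + √(1 - b ^ 2) • xperp⟫ = ξ * b + ζ * √(1 - b ^ 2) := by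
    rw [hdecomp, inner_smul_add_smul_of_orthonormal hxc hxperp horth]
  refine ⟨?_, ?_, hwz, fun z hz hzb => ?_⟩
  · rw [norm_smul_add_smul_of_orthonormal hxc hxperp horth, hb2, sqrt_one]
  · simpa using inner_smul_add_smul_of_orthonormal hxc hxperp horth 1 0 b √(1 - b ^ 2)
  · rw [hwz, hdecomp, hζ]
    exact inner_le_of_orthonormal_of_inner_le hxc hxperp horth hξ1 hξb hz hzb

/-- Theorem 3: closed form of the certification problem CERT.
Let `x̌, w̌ ∈ ℝ^d` be unit vectors with `ξ = ⟨w̌, x̌⟩`, `ζ = √(1 − ξ²)`, and let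
`x̌⊥` be a unit vector orthogonal to `x̌` with `w̌ = ξ·x̌ + ζ·x̌⊥`. For `b ∈ [−1,1]`
with `ξ ≥ b`, the point `z* = b·x̌ + √(1 − b²)·x̌⊥` has unit norm, satisfies
`⟨x̌, z*⟩ = b`, and maximizes `⟨w̌, ·⟩` over the spherical cap
`{z : ‖z‖ = 1, ⟨x̌, z⟩ ≤ b}`, with optimal value `ξ·b + ζ·√(1 − b²)`. -/
theorem cert_closed_form {d : ℕ} (hd : 2 ≤ d)
    (xc wc xperp : EuclideanSpace ℝ (Fin d))
    (hxc : ‖xc‖ = 1) (hwc : ‖wc‖ = 1) (hxperp : ‖xperp‖ = 1)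
    (horth : ⟪xc, xperp⟫ = 0)
    (ξ ζ : ℝ) (hξ : ξ = ⟪wc, xc⟫) (hζ : ζ = Real.sqrt (1 - ξ ^ 2))
    (hdecomp : wc = ξ • xc + ζ • xperp)
    (b : ℝ) (hb : b ∈ Set.Icc (-1 : ℝ) 1) (hξb : b ≤ ξ) :
    ‖b • xc + Real.sqrt (1 - b ^ 2) • xperp‖ = 1 ∧
    ⟪xc, b • xc + Real.sqrt (1 - b ^ 2) • xperp⟫ = b ∧
    ⟪wc, b • xc + Real.sqrt (1 - b ^ 2) • xperp⟫ = ξ * b + ζ * Real.sqrt (1 - b ^ 2) ∧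
    ∀ z : EuclideanSpace ℝ (Fin d), ‖z‖ = 1 → ⟪xc, z⟫ ≤ b →
      ⟪wc, z⟫ ≤ ⟪wc, b • xc + Real.sqrt (1 - b ^ 2) • xperp⟫ :=
  cert_closed_form_general xc wc xperp hxc hwc hxperp horth ξ ζ hξ hζ hdecomp b hb hξb
end
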